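/- arXiv:2406.10686 — 2 statements merged into one kernel-verified Lean document; each statement's English description precedes it below -/
import Mathlib

section
/- Let A = [a₁ … a_n] and Ā = [ā₁ … ā_n] be p×n real matrices with ‖a_i − ā_i‖ ≤ ε and ‖a_i‖ ≤ C for all i, where 0 < ε ≤ C. Then log det(I_p + A Aᵀ) ≤ log det(I_p + Ā Āᵀ) + p·log(1 + 3Cnε). -/
/-!
For every vector `x`,
`⟨a_i, x⟩² - ⟨ā_i, x⟩² = ⟨a_i - ā_i, x⟩ ⟨a_i + ā_i, x⟩ ≤ ε (2C + ε) ‖x‖² ≤ 3Cε ‖x‖²`,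
and summing over the `n` columns gives `A Aᵀ ≤ Ā Āᵀ + δ I` in the Loewner order, with `δ = 3Cnε`.
Hence `I + A Aᵀ ≤ (1 + δ) (I + Ā Āᵀ)`, and the determinant is monotone on positive definite
matrices: writing `M = Yᵀ Y` and conjugating by `Y⁻¹` reduces `M ≤ N` to `I ≤ Y⁻ᵀ N Y⁻¹`,
whose eigenvalues are all at least `1`.
-/

open Matrix WithLp
open scoped MatrixOrder RealInnerProductSpace

theorem EuclideanSpace.real_norm_eq {n : Type*} [Fintype n] (x : EuclideanSpace ℝ n) :
    ‖x‖ = √(∑ i, x i ^ 2) := by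
  simp [EuclideanSpace.norm_eq]

theorem sq_inner_sub_sq_inner_le {E : Type*} [NormedAddCommGroup E] [InnerProductSpace ℝ E]
    (a b x : E) : ⟪a, x⟫ ^ 2 - ⟪b, x⟫ ^ 2 ≤ ‖a - b‖ * (‖a‖ + ‖b‖) * ‖x‖ ^ 2 :=
  calc ⟪a, x⟫ ^ 2 - ⟪b, x⟫ ^ 2 = ⟪a - b, x⟫ * ⟪a + b, x⟫ := by
        rw [inner_sub_left, inner_add_left]; ring
    _ ≤ |⟪a - b, x⟫| * |⟪a + b, x⟫| := by rw [← abs_mul]; exact le_abs_self _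
    _ ≤ (‖a - b‖ * ‖x‖) * ((‖a‖ + ‖b‖) * ‖x‖) := by
        gcongr
        · exact abs_real_inner_le_norm _ _
        · exact (abs_real_inner_le_norm _ _).trans (by gcongr; exact norm_add_le _ _)
    _ = ‖a - b‖ * (‖a‖ + ‖b‖) * ‖x‖ ^ 2 := by ring

namespace Matrix

variable {m n : Type*} [Fintype m] [Fintype n]

theorem dotProduct_mul_transpose_mulVec (A : Matrix m n ℝ) (x : m → ℝ) :
    x ⬝ᵥ (A * Aᵀ) *ᵥ x = ∑ i, ⟪toLp 2 (Aᵀ i), toLp 2 x⟫ ^ 2 := by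
  simp only [EuclideanSpace.inner_eq_star_dotProduct, star_trivial]
  rw [← mulVec_mulVec, dotProduct_mulVec, ← mulVec_transpose, dotProduct]
  simp only [mulVec, transpose_apply, dotProduct_comm, sq]; rfl

variable [DecidableEq m]

theorem mul_transpose_le_mul_transpose_add_smul_one {A B : Matrix m n ℝ} {c : ℝ}
    (h : ∀ i, ‖toLp 2 (Aᵀ i) - toLp 2 (Bᵀ i)‖ * (‖toLp 2 (Aᵀ i)‖ + ‖toLp 2 (Bᵀ i)‖) ≤ c) :
    A * Aᵀ ≤ B * Bᵀ + (Fintype.card n * c) • 1 := by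
  rw [le_iff]
  refine .of_dotProduct_mulVec_nonneg ?_ fun x => ?_
  · simp [IsHermitian, conjTranspose_eq_transpose_of_trivial, transpose_mul]
  have hx : x ⬝ᵥ x = ‖toLp 2 x‖ ^ 2 := by
    rw [← real_inner_self_eq_norm_sq, EuclideanSpace.inner_eq_star_dotProduct, star_trivial]
  have hsum : ∑ i, (⟪toLp 2 (Aᵀ i), toLp 2 x⟫ ^ 2 - ⟪toLp 2 (Bᵀ i), toLp 2 x⟫ ^ 2) ≤
      Fintype.card n * c * ‖toLp 2 x‖ ^ 2 :=
    calc _ ≤ ∑ _i : n, c * ‖toLp 2 x‖ ^ 2 := Finset.sum_le_sum fun i _ =>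
          (sq_inner_sub_sq_inner_le _ _ _).trans (by gcongr; exact h i)
      _ = _ := by rw [Finset.sum_const, Finset.card_univ, nsmul_eq_mul, mul_assoc]
  rw [star_trivial, sub_mulVec, add_mulVec, dotProduct_sub, dotProduct_add, smul_mulVec,
    one_mulVec, dotProduct_smul, smul_eq_mul, hx, dotProduct_mul_transpose_mulVec,
    dotProduct_mul_transpose_mulVec]
  rw [Finset.sum_sub_distrib] at hsum
  linarith

theorem one_le_det_of_one_le {P : Matrix m m ℝ} (h : 1 ≤ P) : 1 ≤ P.det := by
  have hP : IsSelfAdjoint P := by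
    simpa using (IsSelfAdjoint.of_nonneg (sub_nonneg.2 h)).add (IsSelfAdjoint.one (Matrix m m ℝ))
  have hspec := (CFC.one_le_iff (R := ℝ) P hP).1 h
  rw [hP.isHermitian.det_eq_prod_eigenvalues]
  exact Finset.one_le_prod fun i _ => hspec _ (hP.isHermitian.eigenvalues_mem_spectrum_real i)

theorem PosDef.det_le_det_of_le {M N : Matrix m m ℝ} (hM : M.PosDef) (hMN : M ≤ N) :
    M.det ≤ N.det := by
  obtain ⟨y, hy, rfl⟩ :=
    CStarAlgebra.isStrictlyPositive_iff_eq_star_mul_self.mp hM.isStrictlyPositive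
  obtain ⟨z, hyz, -⟩ := isUnit_iff_exists.mp hy
  have hconj : 1 ≤ star z * N * z := by
    simpa [mul_assoc, ← star_mul, hyz, ← mul_assoc _ y z] using
      star_left_conjugate_le_conjugate hMN z
  have hdet : y.det * z.det = 1 := by rw [← det_mul, hyz, det_one]
  have hdet_conj := one_le_det_of_one_le hconj
  simp only [det_mul, star_eq_conjTranspose, det_conjTranspose, star_trivial] at hdet_conj ⊢
  calc y.det * y.det = y.det * y.det * 1 := (mul_one _).symm
    _ ≤ y.det * y.det * (z.det * N.det * z.det) := by gcongr; exact mul_self_nonneg _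
    _ = (y.det * z.det) ^ 2 * N.det := by ring
    _ = N.det := by rw [hdet, one_pow, one_mul]

theorem log_det_one_add_le_of_le {M N : Matrix m m ℝ} (hM : M.PosSemidef) (hN : N.PosSemidef)
    {δ : ℝ} (hδ : 0 ≤ δ) (h : M ≤ N + δ • 1) :
    Real.log (1 + M).det ≤ Real.log (1 + N).det + Fintype.card m * Real.log (1 + δ) := by
  have hle : 1 + M ≤ (1 + δ) • (1 + N) :=
    calc 1 + M ≤ 1 + (N + δ • 1) := add_le_add_right h 1
      _ ≤ 1 + (N + δ • 1) + δ • N := le_add_of_nonneg_right (hN.smul hδ).nonneg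
      _ = (1 + δ) • (1 + N) := by module
  have hMdet := (PosDef.one.add_posSemidef hM).det_pos
  have hNdet := (PosDef.one.add_posSemidef hN).det_pos
  have hdet := (PosDef.one.add_posSemidef hM).det_le_det_of_le hle
  rw [det_smul] at hdet
  calc Real.log (1 + M).det ≤ Real.log ((1 + δ) ^ Fintype.card m * (1 + N).det) :=
        Real.log_le_log hMdet hdet
    _ = _ := by rw [Real.log_mul (by positivity) hNdet.ne', Real.log_pow, add_comm]

end Matrix

theorem logdet_perturb_first {p n : ℕ} (A Abar : Matrix (Fin p) (Fin n) ℝ) (ε C : ℝ)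
    (hε : 0 < ε) (hεC : ε ≤ C)
    (hdiff : ∀ i : Fin n, Real.sqrt (∑ j, (A j i - Abar j i) ^ 2) ≤ ε)
    (hnorm : ∀ i : Fin n, Real.sqrt (∑ j, (A j i) ^ 2) ≤ C) :
    Real.log ((1 + A * A.transpose).det) ≤
      Real.log ((1 + Abar * Abar.transpose).det) + p * Real.log (1 + 3 * C * n * ε) := by
  have hC : 0 ≤ C := hε.le.trans hεC
  have hcol : ∀ i, ‖toLp 2 (Aᵀ i) - toLp 2 (Abarᵀ i)‖ * (‖toLp 2 (Aᵀ i)‖ + ‖toLp 2 (Abarᵀ i)‖)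
      ≤ 3 * C * ε := by
    intro i
    have hd : ‖toLp 2 (Aᵀ i) - toLp 2 (Abarᵀ i)‖ ≤ ε := by
      simpa [EuclideanSpace.real_norm_eq] using hdiff i
    have ha : ‖toLp 2 (Aᵀ i)‖ ≤ C := by simpa [EuclideanSpace.real_norm_eq] using hnorm i
    have hb := norm_le_norm_add_norm_sub (toLp 2 (Aᵀ i)) (toLp 2 (Abarᵀ i))
    calc _ ≤ ε * (C + (C + ε)) := by gcongr; linarith
      _ ≤ 3 * C * ε := by nlinarith
  have hgram : A * Aᵀ ≤ Abar * Abarᵀ + (3 * C * n * ε) • 1 := by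
    convert mul_transpose_le_mul_transpose_add_smul_one hcol using 3
    simp only [Fintype.card_fin]; ring
  simpa using log_det_one_add_le_of_le (by simpa using posSemidef_self_mul_conjTranspose A)
    (by simpa using posSemidef_self_mul_conjTranspose Abar) (by positivity) hgram
end

section
/- Let A = [a₁ … a_n] and Ā = [ā₁ … ā_n] be p×n real matrices with ‖a_i − ā_i‖ ≤ ε and ‖a_i‖ ≤ C for all i, where 0 < ε ≤ C. Then log det(I_p + A Aᵀ) ≤ log det(I_n + Āᵀ Ā) + 3C n^{3/2} ε. -/
/-!
By Sylvester's identity the left side is `log det (1 + AᵀA)`. Concavity of `log det` at the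
positive definite matrix `X = 1 + ĀᵀĀ` bounds it by `log det X + tr (X⁻¹ Δ)` with
`Δ = AᵀA - ĀᵀĀ`. The entries of `Δ` are differences of inner products of columns, hence at most
`3Cε` in absolute value, while `X⁻¹` has operator norm at most one, so its Frobenius norm is at
most `√n` and the absolute values of its entries sum to at most `n √n`.
-/

open Matrix Finset
open scoped InnerProductSpace MatrixOrder

section GramPerturbation

variable {E : Type*} [NormedAddCommGroup E] [InnerProductSpace ℝ E]

theorem abs_inner_sub_inner_le {x x' y y' : E} {ε C : ℝ} (hεC : ε ≤ C)
    (hxy : ‖x - y‖ ≤ ε) (hxy' : ‖x' - y'‖ ≤ ε) (hx : ‖x‖ ≤ C) (hx' : ‖x'‖ ≤ C) :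
    |⟪x, x'⟫_ℝ - ⟪y, y'⟫_ℝ| ≤ 3 * C * ε := by
  have hε : 0 ≤ ε := (norm_nonneg _).trans hxy
  have hy : ‖y‖ ≤ C + ε := by
    calc ‖y‖ = ‖x - (x - y)‖ := by rw [sub_sub_cancel]
      _ ≤ ‖x‖ + ‖x - y‖ := norm_sub_le _ _
      _ ≤ C + ε := add_le_add hx hxy
  calc |⟪x, x'⟫_ℝ - ⟪y, y'⟫_ℝ| = |⟪x - y, x'⟫_ℝ + ⟪y, x' - y'⟫_ℝ| := by
        rw [inner_sub_left, inner_sub_right]; ring_nf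
    _ ≤ ‖x - y‖ * ‖x'‖ + ‖y‖ * ‖x' - y'‖ :=
        (abs_add_le _ _).trans (add_le_add (abs_real_inner_le_norm _ _) (abs_real_inner_le_norm _ _))
    _ ≤ ε * C + (C + ε) * ε := by gcongr; all_goals linarith [norm_nonneg (x - y), norm_nonneg y]
    _ ≤ 3 * C * ε := by nlinarith

theorem abs_gram_sub_gram_le {ι : Type*} {v w : ι → E} {ε C : ℝ} (hεC : ε ≤ C)
    (hvw : ∀ i, ‖v i - w i‖ ≤ ε) (hv : ∀ i, ‖v i‖ ≤ C) (i j : ι) :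
    |(gram ℝ v - gram ℝ w) i j| ≤ 3 * C * ε :=
  abs_inner_sub_inner_le hεC (hvw i) (hvw j) (hv i) (hv j)

end GramPerturbation

namespace Matrix

theorem transpose_mul_self_eq_gram {m ι : Type*} [Fintype m] (A : Matrix m ι ℝ) :
    Aᵀ * A = gram ℝ fun i => WithLp.toLp 2 (Aᵀ i) := by
  ext i j
  simp [gram_apply, mul_apply, PiLp.inner_apply, mul_comm]

variable {ι : Type*} [Fintype ι]

theorem sum_abs_le_card_mul_sqrt_sum_sq (N : Matrix ι ι ℝ) :
    ∑ i, ∑ j, |N i j| ≤ Fintype.card ι * √(∑ i, ∑ j, N i j ^ 2) := by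
  have hCS := sq_sum_le_card_mul_sum_sq (s := (univ : Finset (ι × ι))) (f := fun q => |N q.1 q.2|)
  simp only [card_univ, Fintype.card_prod, sq_abs, Fintype.sum_prod_type, Nat.cast_mul] at hCS
  rw [← Real.sqrt_sq (by positivity : (0 : ℝ) ≤ ∑ i, ∑ j, |N i j|),
    ← Real.sqrt_sq (Nat.cast_nonneg (Fintype.card ι)), ← Real.sqrt_mul (sq_nonneg _)]
  exact Real.sqrt_le_sqrt (by nlinarith)

theorem trace_mul_le_of_abs_le (N Δ : Matrix ι ι ℝ) {δ : ℝ} (hΔ : ∀ i j, |Δ i j| ≤ δ) :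
    (N * Δ).trace ≤ (∑ i, ∑ j, |N i j|) * δ := by
  simp only [trace, diag, mul_apply, sum_mul]
  refine sum_le_sum fun i _ => sum_le_sum fun j _ => ?_
  calc N i j * Δ j i ≤ |N i j * Δ j i| := le_abs_self _
    _ = |N i j| * |Δ j i| := abs_mul _ _
    _ ≤ |N i j| * δ := mul_le_mul_of_nonneg_left (hΔ j i) (abs_nonneg _)

theorem IsSymm.sum_sq_eq_trace_mul_self {N : Matrix ι ι ℝ} (hN : N.IsSymm) :
    ∑ i, ∑ j, N i j ^ 2 = (N * N).trace := by
  simp only [trace, diag, mul_apply, sq]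
  exact sum_congr rfl fun i _ => sum_congr rfl fun j _ => by rw [hN.apply j i]

variable [DecidableEq ι]

theorem PosDef.log_det_le_trace_sub_card {Y : Matrix ι ι ℝ} (hY : Y.PosDef) :
    Real.log Y.det ≤ Y.trace - Fintype.card ι := by
  have hpos := hY.eigenvalues_pos
  rw [hY.isHermitian.det_eq_prod_eigenvalues, hY.isHermitian.trace_eq_sum_eigenvalues]
  simp only [RCLike.ofReal_real_eq_id, id]
  rw [Real.log_prod fun i _ => (hpos i).ne', Fintype.card_eq_sum_ones, Nat.cast_sum,
    ← sum_sub_distrib]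
  exact sum_le_sum fun i _ => by simpa using Real.log_le_sub_one_of_pos (hpos i)

theorem PosDef.log_det_add_le {X Δ : Matrix ι ι ℝ} (hX : X.PosDef) (hXΔ : (X + Δ).PosDef) :
    Real.log (X + Δ).det ≤ Real.log X.det + (X⁻¹ * Δ).trace := by
  -- Conjugating by `S = √X` reduces the claim to `log det ≤ trace - card` at `S⁻¹ (X + Δ) S⁻¹`.
  obtain ⟨S, hSS, hSH⟩ : ∃ S : Matrix ι ι ℝ, S * S = X ∧ S.IsHermitian :=
    ⟨CFC.sqrt X, CFC.sqrt_mul_sqrt_self X hX.posSemidef.nonneg,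
      (CFC.sqrt_nonneg X).posSemidef.isHermitian⟩
  have hS : IsUnit S := isUnit_of_mul_isUnit_left (hSS ▸ hX.isUnit)
  have hZ : (S⁻¹ * (X + Δ) * S⁻¹).PosDef := by
    have := (IsUnit.posDef_star_right_conjugate_iff (isUnit_nonsing_inv_iff.2 hS)).2 hXΔ
    rwa [star_eq_conjTranspose, hSH.inv.eq] at this
  have hdet : (X + Δ).det = X.det * (S⁻¹ * (X + Δ) * S⁻¹).det := by
    rw [← hSS, det_mul, det_mul, det_mul, det_nonsing_inv, Ring.inverse_eq_inv]
    field_simp [((isUnit_iff_isUnit_det S).1 hS).ne_zero]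
  have htrace : (S⁻¹ * (X + Δ) * S⁻¹).trace = Fintype.card ι + (X⁻¹ * Δ).trace := by
    rw [trace_mul_cycle, ← mul_inv_rev, hSS, mul_add,
      nonsing_inv_mul X ((isUnit_iff_isUnit_det X).1 hX.isUnit), trace_add, trace_one]
  rw [hdet, Real.log_mul hX.det_pos.ne' hZ.det_pos.ne']
  linarith [hZ.log_det_le_trace_sub_card]

theorem PosSemidef.trace_inv_one_add_mul_self_le_card {B : Matrix ι ι ℝ} (hB : B.PosSemidef) :
    ((1 + B)⁻¹ * (1 + B)⁻¹).trace ≤ Fintype.card ι := by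
  set M := 1 + B
  have hM : M.PosDef := PosDef.one.add_posSemidef hB
  have hunit : IsUnit M.det := (isUnit_iff_isUnit_det M).1 hM.isUnit
  have hMM : (M * M - 1).PosSemidef := by
    have hBB : (B * B).PosSemidef := by
      have := posSemidef_conjTranspose_mul_self B
      rwa [hB.isHermitian.eq] at this
    rw [show M * M - 1 = B + (B + B * B) by simp only [M]; noncomm_ring]
    exact hB.add (hB.add hBB)
  have hcancel : M⁻¹ * (M * M) * M⁻¹ = 1 := by
    rw [← mul_assoc, nonsing_inv_mul M hunit, one_mul, mul_nonsing_inv M hunit]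
  have h := (hMM.mul_mul_conjTranspose_same M⁻¹).trace_nonneg
  rw [hM.isHermitian.inv.eq, mul_sub, sub_mul, mul_one, hcancel, trace_sub, trace_one] at h
  linarith

theorem PosSemidef.trace_inv_one_add_mul_le {B Δ : Matrix ι ι ℝ} (hB : B.PosSemidef) {δ : ℝ}
    (hδ : 0 ≤ δ) (hΔ : ∀ i j, |Δ i j| ≤ δ) :
    ((1 + B)⁻¹ * Δ).trace ≤ (Fintype.card ι : ℝ) ^ ((3 : ℝ) / 2) * δ := by
  set N := (1 + B)⁻¹
  have hN : N.IsSymm := (PosDef.one.add_posSemidef hB).isHermitian.inv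
  have hpow : (Fintype.card ι : ℝ) ^ ((3 : ℝ) / 2) = Fintype.card ι * √(Fintype.card ι) := by
    rw [show (3 : ℝ) / 2 = 1 + 1 / 2 by norm_num, Real.rpow_add' (by positivity) (by norm_num),
      Real.rpow_one, Real.sqrt_eq_rpow]
  calc (N * Δ).trace ≤ (∑ i, ∑ j, |N i j|) * δ := trace_mul_le_of_abs_le N Δ hΔ
    _ ≤ Fintype.card ι * √(∑ i, ∑ j, N i j ^ 2) * δ := by
        gcongr; exact sum_abs_le_card_mul_sqrt_sum_sq N
    _ ≤ Fintype.card ι * √(Fintype.card ι) * δ := by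
        rw [hN.sum_sq_eq_trace_mul_self]; gcongr; exact hB.trace_inv_one_add_mul_self_le_card
    _ = _ := by rw [hpow]

end Matrix

theorem logdet_perturb_second {p n : ℕ} (A Abar : Matrix (Fin p) (Fin n) ℝ) (ε C : ℝ)
    (hε : 0 < ε) (hεC : ε ≤ C)
    (hdiff : ∀ i : Fin n, Real.sqrt (∑ j, (A j i - Abar j i) ^ 2) ≤ ε)
    (hnorm : ∀ i : Fin n, Real.sqrt (∑ j, (A j i) ^ 2) ≤ C) :
    Real.log ((1 + A * A.transpose).det) ≤
      Real.log ((1 + Abar.transpose * Abar).det) + 3 * C * (n : ℝ) ^ ((3 : ℝ) / 2) * ε := by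
  have hcol (M : Matrix (Fin p) (Fin n) ℝ) (i : Fin n) :
      ‖WithLp.toLp 2 (Mᵀ i)‖ = √(∑ j, M j i ^ 2) := by
    simp [EuclideanSpace.norm_eq]
  have hgram : ∀ i j, |(Aᵀ * A - Abarᵀ * Abar) i j| ≤ 3 * C * ε := by
    rw [transpose_mul_self_eq_gram A, transpose_mul_self_eq_gram Abar]
    exact abs_gram_sub_gram_le hεC (fun i => (hcol (A - Abar) i).trans_le (hdiff i))
      fun i => (hcol A i).trans_le (hnorm i)
  have hB : (Abarᵀ * Abar).PosSemidef := posSemidef_conjTranspose_mul_self Abar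
  have hlogdet := (PosDef.one.add_posSemidef hB).log_det_add_le (Δ := Aᵀ * A - Abarᵀ * Abar)
    (by simpa using PosDef.one.add_posSemidef (posSemidef_conjTranspose_mul_self A))
  have hδ : 0 ≤ 3 * C * ε := by have := hε.trans_le hεC; positivity
  have htrace := hB.trace_inv_one_add_mul_le hδ hgram
  rw [add_add_sub_cancel] at hlogdet
  rw [Fintype.card_fin] at htrace
  rw [det_one_add_mul_comm]
  linarith
end
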